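/- Fix κ > 2, ν ≥ 0, β > 0, σ² > 0, and let φ_θ(t) = σ² φ_{ν,κ}(t/β). Then the two functions t ↦ ∂φ_θ/∂σ²(t) = φ_{ν,κ}(t/β) and t ↦ ∂φ_θ/∂β(t) = (2t²(κ−1)/β³)(B(2(κ−1),ν+1)/B(2κ,ν+1)) σ² φ_{ν,κ−1}(t/β) are linearly independent on any interval (0,b] with 0 < b < β: if α₁ φ_{ν,κ}(t/β) + α₂ ∂φ_θ/∂β(t) = 0 for all t ∈ (0,b], then α₁ = α₂ = 0. -/
import Mathlib

open scoped Real

set_option maxHeartbeats 1000000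

/-- The real Beta function, as an integral. -/
noncomputable def Beta (a b : ℝ) : ℝ :=
  ∫ t in (0:ℝ)..1, t ^ (a - 1) * (1 - t) ^ (b - 1)

/-- The generalized Wendland function with smoothness parameters ν and κ. -/
noncomputable def genWendland (ν κ : ℝ) (r : ℝ) : ℝ :=
  if r < 1 then
    (1 / Beta (2*κ) (ν + 1)) * ∫ u in r..1, u * (u^2 - r^2) ^ (κ - 1) * (1 - u) ^ ν
  else 0

private lemma contRpow {q : ℝ} (hq : 0 ≤ q) : Continuous fun x : ℝ => x ^ q :=
  continuous_iff_continuousAt.2 fun x => Real.continuousAt_rpow_const x q (Or.inr hq)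

private lemma Beta_pos {a c : ℝ} (ha : 1 ≤ a) (hc : 1 ≤ c) : 0 < Beta a c := by
  apply intervalIntegral.intervalIntegral_pos_of_pos_on
  · exact (((contRpow (by linarith)).mul
      ((contRpow (by linarith)).comp (continuous_const.sub continuous_id))).intervalIntegrable _ _)
  · intro x hx
    exact mul_pos (Real.rpow_pos_of_pos hx.1 _) (Real.rpow_pos_of_pos (by linarith [hx.2]) _)
  · norm_num

private lemma contF (ν κ r : ℝ) (hκ : 1 ≤ κ) (hν : 0 ≤ ν) :
    Continuous fun u : ℝ => u * (u^2 - r^2) ^ (κ-1) * (1 - u) ^ ν :=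
  (continuous_id.mul ((contRpow (by linarith)).comp ((continuous_pow 2).sub continuous_const))).mul
    ((contRpow hν).comp (continuous_const.sub continuous_id))

private lemma genWendland_pos {ν κ r : ℝ} (hκ : 1 ≤ κ) (hν : 0 ≤ ν) (hr0 : 0 ≤ r)
    (hr1 : r < 1) : 0 < genWendland ν κ r := by
  rw [genWendland, if_pos hr1]
  apply mul_pos
  · exact one_div_pos.2 (Beta_pos (by linarith) (by linarith))
  · apply intervalIntegral.intervalIntegral_pos_of_pos_on
      ((contF ν κ r hκ hν).intervalIntegrable _ _) _ hr1
    intro x hx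
    have hx0 : 0 < x := lt_of_le_of_lt hr0 hx.1
    have : r^2 < x^2 := by nlinarith [hx.1]
    exact mul_pos (mul_pos hx0 (Real.rpow_pos_of_pos (by linarith) _))
      (Real.rpow_pos_of_pos (by linarith [hx.2]) _)

private lemma genWendland_le {ν κ r : ℝ} (hκ : 1 ≤ κ) (hν : 0 ≤ ν) (hr0 : 0 ≤ r) :
    genWendland ν κ r ≤ 1 / Beta (2*κ) (ν+1) := by
  have hB : 0 < Beta (2*κ) (ν+1) := Beta_pos (by linarith) (by linarith)
  rw [genWendland]
  split_ifs with hr1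
  · have hI : (∫ u in r..1, u * (u^2 - r^2) ^ (κ-1) * (1 - u) ^ ν) ≤ 1 := by
      have h1 : (∫ u in r..1, u * (u^2 - r^2) ^ (κ-1) * (1 - u) ^ ν) ≤ ∫ _ in r..1, (1:ℝ) := by
        apply intervalIntegral.integral_mono_on (μ := MeasureTheory.volume) hr1.le
          ((contF ν κ r hκ hν).intervalIntegrable _ _)
          (intervalIntegrable_const)
        intro x hx
        have hxr : r ≤ x := hx.1
        have hx0 : 0 ≤ x := le_trans hr0 hxr
        have hx1 : x ≤ 1 := hx.2
        have h2 : (x^2 - r^2) ^ (κ-1) ≤ 1 :=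
          Real.rpow_le_one (by nlinarith) (by nlinarith) (by linarith)
        have h3 : (1 - x) ^ ν ≤ 1 := Real.rpow_le_one (by linarith) (by linarith) hν
        have h2' : 0 ≤ (x^2 - r^2) ^ (κ-1) := Real.rpow_nonneg (by nlinarith) _
        have h3' : 0 ≤ (1 - x) ^ ν := Real.rpow_nonneg (by linarith) _
        calc x * (x^2 - r^2) ^ (κ-1) * (1 - x) ^ ν
            ≤ 1 * 1 * 1 := by
              apply mul_le_mul (mul_le_mul hx1 h2 h2' zero_le_one) h3 h3' (by norm_num)
          _ = 1 := by norm_num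
      rw [intervalIntegral.integral_const, smul_eq_mul, mul_one] at h1
      linarith
    calc 1 / Beta (2*κ) (ν+1) * (∫ u in r..1, u * (u^2 - r^2) ^ (κ-1) * (1 - u) ^ ν)
        ≤ 1 / Beta (2*κ) (ν+1) * 1 := by
          exact mul_le_mul_of_nonneg_left hI (by positivity)
      _ = 1 / Beta (2*κ) (ν+1) := mul_one _
  · positivity

private lemma genWendland_anti {ν κ : ℝ} (hκ : 1 ≤ κ) (hν : 0 ≤ ν) {r s : ℝ}
    (h0 : 0 ≤ r) (hrs : r ≤ s) (hs : s < 1) :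
    genWendland ν κ s ≤ genWendland ν κ r := by
  have hr1 : r < 1 := lt_of_le_of_lt hrs hs
  rw [genWendland, genWendland, if_pos hs, if_pos hr1]
  have hB : 0 < Beta (2*κ) (ν+1) := Beta_pos (by linarith) (by linarith)
  apply mul_le_mul_of_nonneg_left _ (by positivity)
  have step1 : (∫ u in s..1, u * (u^2 - s^2) ^ (κ-1) * (1 - u) ^ ν)
      ≤ ∫ u in s..1, u * (u^2 - r^2) ^ (κ-1) * (1 - u) ^ ν := by
    apply intervalIntegral.integral_mono_on (μ := MeasureTheory.volume) hs.le
      ((contF ν κ s hκ hν).intervalIntegrable _ _)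
      ((contF ν κ r hκ hν).intervalIntegrable _ _)
    intro x hx
    have hx0 : 0 ≤ x := le_trans h0 (le_trans hrs hx.1)
    have hs2 : s^2 ≤ x^2 := by nlinarith [hx.1]
    have hr2 : r^2 ≤ s^2 := by nlinarith
    have hpow : (x^2 - s^2) ^ (κ-1) ≤ (x^2 - r^2) ^ (κ-1) :=
      Real.rpow_le_rpow (by linarith) (by linarith) (by linarith)
    have h3' : 0 ≤ (1 - x) ^ ν := Real.rpow_nonneg (by linarith [hx.2]) _
    have := mul_le_mul_of_nonneg_left hpow hx0
    nlinarith
  have step2 : (∫ u in s..1, u * (u^2 - r^2) ^ (κ-1) * (1 - u) ^ ν)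
      ≤ ∫ u in r..1, u * (u^2 - r^2) ^ (κ-1) * (1 - u) ^ ν := by
    have hadd := intervalIntegral.integral_add_adjacent_intervals
      ((contF ν κ r hκ hν).intervalIntegrable (μ := MeasureTheory.volume) r s)
      ((contF ν κ r hκ hν).intervalIntegrable (μ := MeasureTheory.volume) s 1)
    have hnn : 0 ≤ ∫ u in r..s, u * (u^2 - r^2) ^ (κ-1) * (1 - u) ^ ν := by
      apply intervalIntegral.integral_nonneg hrs
      intro x hx
      have hx0 : 0 ≤ x := le_trans h0 hx.1
      have : r^2 ≤ x^2 := by nlinarith [hx.1]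
      have h2' : 0 ≤ (x^2 - r^2) ^ (κ-1) := Real.rpow_nonneg (by linarith) _
      have h3' : 0 ≤ (1 - x) ^ ν := Real.rpow_nonneg (by linarith [hx.2, hs]) _
      positivity
    linarith
  linarith

private lemma genWendland_nonneg {ν κ r : ℝ} (hκ : 1 ≤ κ) (hν : 0 ≤ ν) (hr0 : 0 ≤ r) :
    0 ≤ genWendland ν κ r := by
  rcases lt_or_ge r 1 with hr1 | hr1
  · exact (genWendland_pos hκ hν hr0 hr1).le
  · rw [genWendland, if_neg (not_lt.2 hr1)]

/-- For κ > 2, the partial derivatives of `φ_θ(t) = σ² φ_{ν,κ}(t/β)` with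
respect to σ² and β are linearly independent on any interval `(0,b]` with `0 < b < β`. -/
theorem genWendland_partials_linear_independent (ν κ : ℝ) (hκ : 2 < κ) (hν : 0 ≤ ν)
    (β σ2 b : ℝ) (hβ : 0 < β) (hσ2 : 0 < σ2) (hb0 : 0 < b) (hbβ : b < β)
    (α₁ α₂ : ℝ)
    (h : ∀ t ∈ Set.Ioc (0:ℝ) b,
      α₁ * genWendland ν κ (t / β) +
        α₂ * ((2 * t^2 * (κ - 1) / β^3) *
          (Beta (2*(κ-1)) (ν + 1) / Beta (2*κ) (ν + 1)) *
          σ2 * genWendland ν (κ - 1) (t / β)) = 0) :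
    α₁ = 0 ∧ α₂ = 0 := by
  have hB1 : 0 < Beta (2*(κ-1)) (ν+1) := Beta_pos (by linarith) (by linarith)
  have hB2 : 0 < Beta (2*κ) (ν+1) := Beta_pos (by linarith) (by linarith)
  have hr1 : b / β < 1 := (div_lt_one hβ).2 hbβ
  have hr0 : 0 < b / β := div_pos hb0 hβ
  set m := genWendland ν κ (b/β) with hm_def
  have hm : 0 < m := genWendland_pos (by linarith) hν hr0.le hr1
  set M : ℝ := 1 / Beta (2*(κ-1)) (ν+1) with hM_def
  have hM : 0 < M := by positivity
  set C : ℝ := 2 * (κ - 1) / β^3 * (Beta (2*(κ-1)) (ν+1) / Beta (2*κ) (ν+1)) * σ2 * M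
    with hC_def
  have hC : 0 < C :=
    mul_pos (mul_pos (mul_pos (div_pos (by linarith) (by positivity)) (div_pos hB1 hB2)) hσ2) hM
  set K : ℝ := |α₂| * C with hK_def
  have hK : 0 ≤ K := mul_nonneg (abs_nonneg _) hC.le
  -- key inequality
  have key : ∀ t ∈ Set.Ioc (0:ℝ) b, |α₁| * m ≤ K * t^2 := by
    intro t ht
    obtain ⟨ht0, htb⟩ := ht
    have htr0 : 0 < t / β := div_pos ht0 hβ
    have htr1 : t / β < 1 := by
      apply (div_lt_one hβ).2; linarith
    have hf : 0 < genWendland ν κ (t/β) := genWendland_pos (by linarith) hν htr0.le htr1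
    have hfm : m ≤ genWendland ν κ (t/β) :=
      genWendland_anti (by linarith) hν htr0.le ((div_le_div_iff_of_pos_right hβ).2 htb) hr1
    have hg0 : 0 ≤ genWendland ν (κ-1) (t/β) :=
      genWendland_nonneg (by linarith) hν htr0.le
    have hgM : genWendland ν (κ-1) (t/β) ≤ M := by
      have := genWendland_le (κ := κ - 1) (ν := ν) (r := t/β) (by linarith) hν htr0.le
      rwa [hM_def]
    have heq := h t ⟨ht0, htb⟩
    set ct : ℝ := (2 * t^2 * (κ - 1) / β^3) *
      (Beta (2*(κ-1)) (ν + 1) / Beta (2*κ) (ν + 1)) * σ2 * genWendland ν (κ - 1) (t / β)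
      with hct_def
    have hct0 : 0 ≤ ct :=
      mul_nonneg (mul_nonneg (mul_nonneg (div_nonneg (by nlinarith [sq_nonneg t])
        (by positivity)) (div_nonneg hB1.le hB2.le)) hσ2.le) hg0
    have he : α₁ * genWendland ν κ (t/β) = -(α₂ * ct) := by linarith [heq]
    have habs : |α₁| * genWendland ν κ (t/β) = |α₂| * ct := by
      have := congrArg abs he
      rwa [abs_neg, abs_mul, abs_mul, abs_of_nonneg hf.le, abs_of_nonneg hct0] at this
    have hctK : |α₂| * ct ≤ K * t^2 := by
      rw [hK_def, hct_def, hC_def]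
      have ht2 : 0 ≤ t^2 := sq_nonneg t
      have h1 : (2 * t^2 * (κ - 1) / β^3) *
          (Beta (2*(κ-1)) (ν + 1) / Beta (2*κ) (ν + 1)) * σ2 * genWendland ν (κ - 1) (t / β)
          ≤ (2 * t^2 * (κ - 1) / β^3) *
          (Beta (2*(κ-1)) (ν + 1) / Beta (2*κ) (ν + 1)) * σ2 * M := by
        exact mul_le_mul_of_nonneg_left hgM
          (mul_nonneg (mul_nonneg (div_nonneg (by nlinarith [sq_nonneg t]) (by positivity))
            (div_nonneg hB1.le hB2.le)) hσ2.le)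
      have h2 : |α₂| * ((2 * t^2 * (κ - 1) / β^3) *
          (Beta (2*(κ-1)) (ν + 1) / Beta (2*κ) (ν + 1)) * σ2 * genWendland ν (κ - 1) (t / β))
          ≤ |α₂| * ((2 * t^2 * (κ - 1) / β^3) *
          (Beta (2*(κ-1)) (ν + 1) / Beta (2*κ) (ν + 1)) * σ2 * M) :=
        mul_le_mul_of_nonneg_left h1 (abs_nonneg _)
      calc |α₂| * ((2 * t^2 * (κ - 1) / β^3) *
          (Beta (2*(κ-1)) (ν + 1) / Beta (2*κ) (ν + 1)) * σ2 * genWendland ν (κ - 1) (t / β))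
          ≤ |α₂| * ((2 * t^2 * (κ - 1) / β^3) *
          (Beta (2*(κ-1)) (ν + 1) / Beta (2*κ) (ν + 1)) * σ2 * M) := h2
        _ = |α₂| * (2 * (κ - 1) / β^3 * (Beta (2*(κ-1)) (ν+1) / Beta (2*κ) (ν+1)) * σ2 * M)
            * t^2 := by ring
    calc |α₁| * m ≤ |α₁| * genWendland ν κ (t/β) :=
          mul_le_mul_of_nonneg_left hfm (abs_nonneg _)
      _ = |α₂| * ct := habs
      _ ≤ K * t^2 := hctK
  -- conclude α₁ = 0
  have hα₁ : α₁ = 0 := by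
    by_contra hne
    have hε : 0 < |α₁| * m := mul_pos (abs_pos.2 hne) hm
    set ε : ℝ := |α₁| * m with hε_def
    set t₀ : ℝ := min b (Real.sqrt (ε / (2 * (K + 1)))) with ht₀_def
    have hsq : 0 < Real.sqrt (ε / (2 * (K + 1))) :=
      Real.sqrt_pos.2 (by positivity)
    have ht₀0 : 0 < t₀ := lt_min hb0 hsq
    have ht₀b : t₀ ≤ b := min_le_left _ _
    have hkey := key t₀ ⟨ht₀0, ht₀b⟩
    have ht₀sq : t₀^2 ≤ ε / (2 * (K + 1)) := by
      have h1 : t₀ ≤ Real.sqrt (ε / (2 * (K + 1))) := min_le_right _ _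
      have h2 : t₀^2 ≤ Real.sqrt (ε / (2 * (K + 1)))^2 := by nlinarith [ht₀0.le]
      rwa [Real.sq_sqrt (by positivity)] at h2
    have hKK : K * t₀^2 ≤ (K + 1) * (ε / (2 * (K + 1))) := by
      apply mul_le_mul (by linarith) ht₀sq (sq_nonneg _) (by linarith)
    have : (K + 1) * (ε / (2 * (K + 1))) = ε / 2 := by
      field_simp
    linarith
  refine ⟨hα₁, ?_⟩
  have hb' := h b ⟨hb0, le_refl b⟩
  rw [hα₁, zero_mul, zero_add] at hb'
  have hgpos : 0 < genWendland ν (κ-1) (b/β) :=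
    genWendland_pos (by linarith) hν hr0.le hr1
  have hX : 0 < (2 * b^2 * (κ - 1) / β^3) *
      (Beta (2*(κ-1)) (ν + 1) / Beta (2*κ) (ν + 1)) * σ2 * genWendland ν (κ - 1) (b / β) := by
    exact mul_pos (mul_pos (mul_pos (div_pos (by nlinarith) (by positivity))
      (div_pos hB1 hB2)) hσ2) hgpos
  exact (mul_eq_zero.1 hb').resolve_right (ne_of_gt hX)
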